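/- arXiv:2212.11452 — 2 statements merged into one kernel-verified Lean document; each statement's English description precedes it below -/
import Mathlib

section
/- Let p ≥ 3 be an integer and τ ∈ (−1/(p−1), 1). If B is a connected open subset of one of the intervals (−∞, −E_∞), (−E_∞, E_∞), or (E_∞, ∞), then for every r ∈ (−1,1), sup_{u₁,u₂ ∈ B} Σ₂^{p,τ}(r,u₁,u₂) ≤ sup_{u ∈ B} Σ₂^{p,τ}(r,u,u). -/
/-!
`Σ₂(r, u₁, u₂) ≤ Σ₂(r, m, m)` for `m = (u₁ + u₂)/2` and all `u₁, u₂`, and `m ∈ B` since `B` is an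
interval. Write `φ_τ(v) = v²/(2(1+τ)) - 1/2 - I_τ(max(|v|, 1+τ))`: as `I_τ` is increasing and convex
on `[1+τ, ∞)` (its derivative is `u/(1+τ) - 2/(u + √(u² - 4τ))`), the midpoint defect
`φ(u₁) + φ(u₂) - 2φ(m)` of `φ_{τ,p}` is at most `(u₁ - u₂)²/(4p(p-1)(1+τ))`. The quadratic form
subtracted in `Σ₂` drops by `(k₁ - k₂)(u₁ - u₂)²/(4pαb)` at the midpoint, which is at least as
much because `αb ≤ (p-1)(1+τ)(k₁ - k₂)`. For the latter put `t = r^(p-2)`, `q = 1 - t²r²` and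
`s = (p-1)τt(1-r²)`: then `b = (q+s)(q-s)` with `|s| < q` by AM-GM on the geometric sum
`1 + r² + ⋯ + r^(2(p-2))`, and `(p-1)(1+τ)(k₁ - k₂) - αb` is `q+s` times a factor that is affine
in `τ` and nonnegative at `τ = -1/(p-1)` and at `τ = 1`.
-/

noncomputable section

/-- The function `I_τ(u)` from the explicit formula for the logarithmic potential. -/
def Itau (τ u : ℝ) : ℝ :=
  if τ = 0 then -Real.log |u| + u ^ 2 / 2 - 1 / 2
  else u ^ 2 / (2 * (1 + τ)) - |u| * (|u| - Real.sqrt (u ^ 2 - 4 * τ)) / (4 * τ)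
    - Real.log ((|u| + Real.sqrt (u ^ 2 - 4 * τ)) / 2)

/-- The logarithmic potential `φ_τ` of the uniform measure on the ellipse `E_τ`. -/
def phiTau (τ u : ℝ) : ℝ :=
  u ^ 2 / (2 * (1 + τ)) - 1 / 2 - if 1 + τ < |u| then Itau τ u else 0

/-- `φ_{τ,p}(u) = φ_τ(u/√(p(p-1)))`. -/
def phiTauP (p : ℕ) (τ u : ℝ) : ℝ := phiTau τ (u / Real.sqrt (p * ((p : ℝ) - 1)))

/-- The annealed complexity function `Σ^{p,τ}`. -/
def SigmaOne (p : ℕ) (τ u : ℝ) : ℝ :=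
  1 / 2 + Real.log ((p : ℝ) - 1) / 2 - u ^ 2 / (2 * p * (1 + ((p : ℝ) - 1) * τ)) + phiTauP p τ u

/-- The threshold `E_∞ = √(p(p-1)(1+τ))`. -/
def Einf (p : ℕ) (τ : ℝ) : ℝ := Real.sqrt (p * ((p : ℝ) - 1) * (1 + τ))

/-- The critical value `τ_p`. -/
def tauCrit (p : ℕ) : ℝ :=
  (((p : ℝ) - 2) - Real.log ((p : ℝ) - 1)) /
    (((p : ℝ) - 1) * Real.log ((p : ℝ) - 1) - ((p : ℝ) - 2))

/-- `θ_{p,τ}`. -/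
def thetaPT (p : ℕ) (τ : ℝ) : ℝ :=
  Real.log ((p : ℝ) - 1) / 2 - ((p : ℝ) - 2) * (1 + τ) / (2 * (1 + ((p : ℝ) - 1) * τ))

/-- `h(r) = (1/2) log((1-r²)/(1-r^{2p-2}))`. -/
def hFun (p : ℕ) (r : ℝ) : ℝ := Real.log ((1 - r ^ 2) / (1 - r ^ (2 * p - 2))) / 2

/-- `b(r)`. -/
def bFun (p : ℕ) (τ r : ℝ) : ℝ :=
  (1 - r ^ (2 * p - 2)) ^ 2 - ((p : ℝ) - 1) ^ 2 * τ ^ 2 * r ^ (2 * (p - 2)) * (1 - r ^ 2) ^ 2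

/-- `k₁(r)`. -/
def k1Fun (p : ℕ) (τ r : ℝ) : ℝ :=
  bFun p τ r + r ^ (2 * p - 2) * (1 - r ^ (2 * p - 2) + τ * ((p : ℝ) - 1) * (1 - r ^ 2))

/-- `k₂(r)`. -/
def k2Fun (p : ℕ) (τ r : ℝ) : ℝ :=
  -(r ^ p * (1 - r ^ (2 * p - 2))) - τ * ((p : ℝ) - 1) * r ^ (3 * p - 4) * (1 - r ^ 2)

/-- The two-point complexity function `Σ₂^{p,τ}(r,u₁,u₂)`. -/
def SigmaTwo (p : ℕ) (τ r u₁ u₂ : ℝ) : ℝ :=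
  1 + Real.log ((p : ℝ) - 1) + hFun p r
    - (k1Fun p τ r * u₁ ^ 2 + 2 * k2Fun p τ r * u₁ * u₂ + k1Fun p τ r * u₂ ^ 2) /
        (2 * p * (1 + ((p : ℝ) - 1) * τ) * bFun p τ r)
    + phiTauP p τ u₁ + phiTauP p τ u₂

/-- A subset of `ℝ` is nice if it is a finite union of open intervals. -/
def NiceSet (B : Set ℝ) : Prop := ∃ s : Finset (ℝ × ℝ), B = ⋃ q ∈ s, Set.Ioo q.1 q.2

open Set

section Itau

variable {τ u : ℝ}

lemma itau_abs : Itau τ |u| = Itau τ u := by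
  unfold Itau; rw [abs_abs, sq_abs]

lemma itau_one_add_self (hτ : -1 < τ) (hτ' : τ ≤ 1) : Itau τ (1 + τ) = 0 := by
  have hs : √((1 + τ) ^ 2 - 4 * τ) = 1 - τ := by
    rw [show (1 + τ) ^ 2 - 4 * τ = (1 - τ) ^ 2 by ring, Real.sqrt_sq (by linarith)]
  unfold Itau
  split_ifs with h
  · subst h; simp
  · rw [abs_of_pos (by linarith), hs, show (1 + τ + (1 - τ)) / 2 = 1 by ring, Real.log_one]
    field_simp
    ring

lemma one_sub_le_sqrt_sq_sub (hτ : -1 < τ) (hu : 1 + τ ≤ u) : 1 - τ ≤ √(u ^ 2 - 4 * τ) :=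
  Real.le_sqrt_of_sq_le (by nlinarith)

lemma hasDerivAt_itau_zero (hu : 0 < u) : HasDerivAt (Itau 0) (u - u⁻¹) u := by
  have heq : (fun x => -Real.log x + x ^ 2 / 2 - 1 / 2) =ᶠ[nhds u] Itau 0 := by
    filter_upwards [eventually_gt_nhds hu] with x hx
    simp [Itau, abs_of_pos hx]
  have hd := ((Real.hasDerivAt_log hu.ne').neg.add ((hasDerivAt_pow 2 u).div_const 2)).sub_const
    (1 / 2)
  refine (hd.congr_of_eventuallyEq heq.symm).congr_deriv ?_
  push_cast
  ring

lemma hasDerivAt_itau_of_ne_zero (hτ : τ ≠ 0) (hu : 0 < u) (hs : 0 < u ^ 2 - 4 * τ) :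
    HasDerivAt (Itau τ) (u / (1 + τ) - 2 / (u + √(u ^ 2 - 4 * τ))) u := by
  set s := √(u ^ 2 - 4 * τ)
  have hs0 : 0 < s := Real.sqrt_pos.mpr hs
  have hs2 : s ^ 2 = u ^ 2 - 4 * τ := Real.sq_sqrt hs.le
  have heq : (fun x => x ^ 2 / (2 * (1 + τ)) - x * (x - √(x ^ 2 - 4 * τ)) / (4 * τ)
      - Real.log ((x + √(x ^ 2 - 4 * τ)) / 2)) =ᶠ[nhds u] Itau τ := by
    filter_upwards [eventually_gt_nhds hu] with x hx
    simp only [Itau, if_neg hτ, abs_of_pos hx]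
  have hsq : HasDerivAt (fun x => √(x ^ 2 - 4 * τ)) (1 / (2 * s) * (2 * u)) u := by
    refine (Real.hasDerivAt_sqrt hs.ne').comp u ?_
    simpa using (hasDerivAt_pow 2 u).sub_const (4 * τ)
  have hmul : HasDerivAt (fun x => x * (x - √(x ^ 2 - 4 * τ)))
      (1 * (u - s) + u * (1 - 1 / (2 * s) * (2 * u))) u :=
    (hasDerivAt_id u).mul ((hasDerivAt_id u).sub hsq)
  have hlog : HasDerivAt (fun x => Real.log ((x + √(x ^ 2 - 4 * τ)) / 2))
      ((1 + 1 / (2 * s) * (2 * u)) / 2 / ((u + s) / 2)) u :=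
    (((hasDerivAt_id u).add hsq).div_const 2).log (half_pos (show 0 < u + s by linarith)).ne'
  have hd := (((hasDerivAt_pow 2 u).div_const (2 * (1 + τ))).sub (hmul.div_const (4 * τ))).sub hlog
  refine (hd.congr_of_eventuallyEq heq.symm).congr_deriv ?_
  have hus : u + s ≠ 0 := by positivity
  field_simp
  linear_combination (2 * s - 2 * u) * hs2

lemma hasDerivAt_itau (hτ : -1 < τ) (hu : 1 + τ < u) :
    HasDerivAt (Itau τ) (u / (1 + τ) - 2 / (u + √(u ^ 2 - 4 * τ))) u := by
  have hu0 : 0 < u := by linarith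
  rcases eq_or_ne τ 0 with rfl | hτ0
  · convert hasDerivAt_itau_zero hu0 using 1
    rw [show u ^ 2 - 4 * 0 = u ^ 2 by ring, Real.sqrt_sq hu0.le]
    field_simp
    ring
  · have : (1 + τ) ^ 2 < u ^ 2 := by gcongr; linarith
    exact hasDerivAt_itau_of_ne_zero hτ0 hu0 (by nlinarith [sq_nonneg (1 - τ)])

lemma continuousOn_itau (hτ : -1 < τ) : ContinuousOn (Itau τ) (Ici (1 + τ)) := by
  have hpos : ∀ x ∈ Ici (1 + τ), 0 < |x| := fun x hx => by
    have : 1 + τ ≤ x := hx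
    exact abs_pos.mpr (by linarith)
  unfold Itau
  split_ifs with h
  · subst h
    exact (((continuous_abs.continuousOn.log fun x hx => (hpos x hx).ne').neg.add
      (by fun_prop)).sub (by fun_prop))
  · refine ((by fun_prop : Continuous _).continuousOn).sub (ContinuousOn.log (by fun_prop) ?_)
    intro x hx
    have := hpos x hx
    positivity

lemma monotoneOn_itau (hτ : -1 < τ) : MonotoneOn (Itau τ) (Ici (1 + τ)) := by
  refine monotoneOn_of_deriv_nonneg (convex_Ici _) (continuousOn_itau hτ)
    (fun x hx => (hasDerivAt_itau hτ (by simpa using hx)).differentiableAt.differentiableWithinAt)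
    fun x hx => ?_
  rw [interior_Ici] at hx
  have hx : 1 + τ < x := hx
  rw [(hasDerivAt_itau hτ hx).deriv, sub_nonneg]
  have hs := one_sub_le_sqrt_sq_sub hτ hx.le
  calc 2 / (x + √(x ^ 2 - 4 * τ)) ≤ 1 := by rw [div_le_one (by linarith)]; linarith
    _ ≤ x / (1 + τ) := by rw [le_div_iff₀ (by linarith)]; linarith

lemma convexOn_itau (hτ : -1 < τ) : ConvexOn ℝ (Ici (1 + τ)) (Itau τ) := by
  refine MonotoneOn.convexOn_of_deriv (convex_Ici _) (continuousOn_itau hτ)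
    (fun x hx => (hasDerivAt_itau hτ (by simpa using hx)).differentiableAt.differentiableWithinAt)
    ?_
  rw [interior_Ici]
  intro x hx y hy hxy
  have hx : 1 + τ < x := hx
  have hy : 1 + τ < y := hy
  rw [(hasDerivAt_itau hτ hx).deriv, (hasDerivAt_itau hτ hy).deriv]
  have hsx := one_sub_le_sqrt_sq_sub hτ hx.le
  gcongr <;> linarith

end Itau

theorem ConvexOn.comp_of_mapsTo {𝕜 E α β : Type*} [Semiring 𝕜] [PartialOrder 𝕜]
    [AddCommMonoid E] [AddCommMonoid α] [PartialOrder α] [AddCommMonoid β] [PartialOrder β]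
    [SMul 𝕜 E] [SMul 𝕜 α] [SMul 𝕜 β] {s : Set E} {t : Set β} {f : E → β} {g : β → α}
    (hg : ConvexOn 𝕜 t g) (hf : ConvexOn 𝕜 s f) (hg' : MonotoneOn g t) (hst : MapsTo f s t) :
    ConvexOn 𝕜 s (g ∘ f) :=
  ⟨hf.1, fun _ hx _ hy _ _ ha hb hab =>
    (hg' (hst (hf.1 hx hy ha hb hab)) (hg.1 (hst hx) (hst hy) ha hb hab)
      (hf.2 hx hy ha hb hab)).trans (hg.2 (hst hx) (hst hy) ha hb hab)⟩

section phiTau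

variable {τ : ℝ}

lemma phiTau_eq (hτ : -1 < τ) (hτ' : τ ≤ 1) (v : ℝ) :
    phiTau τ v = v ^ 2 / (2 * (1 + τ)) - 1 / 2 - Itau τ (max |v| (1 + τ)) := by
  unfold phiTau
  split_ifs with h
  · rw [max_eq_left h.le, itau_abs]
  · rw [max_eq_right (not_lt.mp h), itau_one_add_self hτ hτ']

lemma convexOn_itau_max_abs (hτ : -1 < τ) :
    ConvexOn ℝ univ fun v => Itau τ (max |v| (1 + τ)) :=
  (convexOn_itau hτ).comp_of_mapsTo ((convexOn_norm convex_univ).sup (convexOn_const _ convex_univ))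
    (monotoneOn_itau hτ) fun _ _ => mem_Ici.mpr (le_max_right _ _)

lemma phiTau_add_sub_two_mul_phiTau_midpoint_le (hτ : -1 < τ) (hτ' : τ ≤ 1) (v₁ v₂ : ℝ) :
    phiTau τ v₁ + phiTau τ v₂ - 2 * phiTau τ ((v₁ + v₂) / 2) ≤ (v₁ - v₂) ^ 2 / (4 * (1 + τ)) := by
  have hmid := (convexOn_itau_max_abs hτ).2 (mem_univ v₁) (mem_univ v₂)
    (by norm_num : (0 : ℝ) ≤ 1 / 2) (by norm_num : (0 : ℝ) ≤ 1 / 2) (by norm_num)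
  simp only [smul_eq_mul] at hmid
  rw [show 1 / 2 * v₁ + 1 / 2 * v₂ = (v₁ + v₂) / 2 by ring] at hmid
  rw [phiTau_eq hτ hτ', phiTau_eq hτ hτ', phiTau_eq hτ hτ']
  have hq : v₁ ^ 2 / (2 * (1 + τ)) + v₂ ^ 2 / (2 * (1 + τ)) -
      2 * (((v₁ + v₂) / 2) ^ 2 / (2 * (1 + τ))) = (v₁ - v₂) ^ 2 / (4 * (1 + τ)) := by
    field_simp
    ring
  linarith

end phiTau

section TwoPointAlgebra

lemma add_mul_pos_of_abs_le {x y τ : ℝ} (hy : |y| ≤ x) (hx : 0 < x) (hτ : |τ| < 1) :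
    0 < x + τ * y := by
  have : |τ * y| < x := by
    rw [abs_mul]
    nlinarith [abs_nonneg τ, abs_nonneg y]
  linarith [neg_abs_le (τ * y)]

lemma add_mul_nonneg_of_mem_Icc {a b lo hi x : ℝ} (hlo : 0 ≤ a + lo * b) (hhi : 0 ≤ a + hi * b)
    (hx : x ∈ Icc lo hi) : 0 ≤ a + x * b := by
  rcases le_total 0 b with hb | hb <;> nlinarith [hx.1, hx.2]

lemma add_one_mul_pow_le_geom_sum (q : ℝ) (k : ℕ) :
    ((k : ℝ) + 1) * q ^ k ≤ ∑ j ∈ Finset.range (k + 1), (q ^ 2) ^ j := by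
  have hpair : ∀ j ∈ Finset.range (k + 1), 2 * q ^ k ≤ (q ^ 2) ^ j + (q ^ 2) ^ (k - j) := by
    intro j hj
    have hjk : q ^ j * q ^ (k - j) = q ^ k := by
      rw [← pow_add, Nat.add_sub_cancel' (Finset.mem_range_succ_iff.mp hj)]
    rw [pow_right_comm, pow_right_comm q 2 (k - j)]
    nlinarith [sq_nonneg (q ^ j - q ^ (k - j))]
  have hreflect : ∑ j ∈ Finset.range (k + 1), (q ^ 2) ^ (k - j)
      = ∑ j ∈ Finset.range (k + 1), (q ^ 2) ^ j :=
    Finset.sum_range_reflect (fun j => (q ^ 2) ^ j) (k + 1)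
  have := Finset.sum_le_sum hpair
  rw [Finset.sum_add_distrib, hreflect, Finset.sum_const, Finset.card_range, nsmul_eq_mul] at this
  push_cast at this
  linarith

lemma add_one_mul_abs_pow_mul_le {x : ℝ} (hx : |x| ≤ 1) (k : ℕ) :
    ((k : ℝ) + 1) * |x ^ k| * (1 - x ^ 2) ≤ 1 - (x ^ k) ^ 2 * x ^ 2 := by
  have h0 : 0 ≤ 1 - x ^ 2 := by nlinarith [sq_abs x, abs_nonneg x]
  calc ((k : ℝ) + 1) * |x ^ k| * (1 - x ^ 2) = (1 - x ^ 2) * (((k : ℝ) + 1) * |x| ^ k) := by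
        rw [abs_pow]; ring
    _ ≤ (1 - x ^ 2) * ∑ j ∈ Finset.range (k + 1), (|x| ^ 2) ^ j :=
        mul_le_mul_of_nonneg_left (add_one_mul_pow_le_geom_sum |x| k) h0
    _ = 1 - (x ^ k) ^ 2 * x ^ 2 := by rw [sq_abs, mul_neg_geom_sum]; ring

lemma one_sub_abs_pow_mul_sq_le {x : ℝ} (hx : |x| ≤ 1) (k : ℕ) :
    (1 - |x ^ k|) * x ^ 2 ≤ k * (1 - x ^ 2) := by
  have hbern := one_add_mul_sub_le_pow (by linarith [abs_nonneg x] : -1 ≤ |x|) k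
  have hx2 : x ^ 2 ≤ 1 + |x| := by nlinarith [sq_abs x, abs_nonneg x]
  rw [abs_pow]
  calc (1 - |x| ^ k) * x ^ 2 ≤ (k * (1 - |x|)) * x ^ 2 := by gcongr; linarith
    _ ≤ (k * (1 - |x|)) * (1 + |x|) :=
        mul_le_mul_of_nonneg_left hx2 (mul_nonneg k.cast_nonneg (by linarith))
    _ = k * (1 - x ^ 2) := by rw [← sq_abs x]; ring

lemma twoPoint_residual_nonneg {n t r τ : ℝ} (hn : 1 ≤ n) (hτ : τ ∈ Icc (-(1 / n)) 1)
    (ht : |t| ≤ 1) (hS : n * |t| * (1 - r ^ 2) ≤ 1 - t ^ 2 * r ^ 2)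
    (hB : (1 - |t|) * r ^ 2 ≤ (n - 1) * (1 - r ^ 2)) :
    0 ≤ (n - 1) * (1 - t ^ 2 * r ^ 2 - n * τ * t * (1 - r ^ 2)) +
      n * (1 + τ) * t * (t + 1) * r ^ 2 := by
  set a := (n - 1) * (1 - t ^ 2 * r ^ 2) + n * t * (t + 1) * r ^ 2
  set b := n * t * (t + 1) * r ^ 2 - (n - 1) * n * t * (1 - r ^ 2)
  have hlo : 0 ≤ a + -(1 / n) * b := by
    have : a + -(1 / n) * b = (n - 1) * (1 + t) := by
      field_simp
      ring
    rw [this]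
    exact mul_nonneg (by linarith) (by linarith [neg_abs_le t])
  have hhi : 0 ≤ a + 1 * b := by
    rcases le_total 0 t with h | h
    · rw [abs_of_nonneg h] at hS
      nlinarith [mul_le_mul_of_nonneg_left hS (by linarith : (0 : ℝ) ≤ n - 1),
        mul_nonneg (mul_nonneg (by linarith : (0 : ℝ) ≤ n) h) (sq_nonneg r)]
    · rw [abs_of_nonpos h] at hS hB
      nlinarith [mul_le_mul_of_nonneg_left hS (by linarith : (0 : ℝ) ≤ n - 1),
        mul_le_mul_of_nonneg_left hB (by nlinarith : (0 : ℝ) ≤ 2 * n * -t)]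
  have := add_mul_nonneg_of_mem_Icc hlo hhi hτ
  linarith

end TwoPointAlgebra

section SigmaTwo

variable {p : ℕ} {τ r t : ℝ}

lemma bFun_eq_mul (hp : 2 ≤ p) (ht : r ^ (p - 2) = t) :
    bFun p τ r = (1 - t ^ 2 * r ^ 2 + ((p : ℝ) - 1) * τ * t * (1 - r ^ 2)) *
      (1 - t ^ 2 * r ^ 2 - ((p : ℝ) - 1) * τ * t * (1 - r ^ 2)) := by
  obtain ⟨k, rfl⟩ : ∃ k, p = k + 2 := ⟨p - 2, by omega⟩
  subst ht
  rw [bFun, show 2 * (k + 2) - 2 = 2 * k + 2 by omega, show 2 * (k + 2 - 2) = 2 * k by omega,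
    Nat.add_sub_cancel]
  push_cast
  ring

lemma sub_mul_bFun_eq_mul (hp : 2 ≤ p) (ht : r ^ (p - 2) = t) :
    ((p : ℝ) - 1) * (1 + τ) * (k1Fun p τ r - k2Fun p τ r) - (1 + ((p : ℝ) - 1) * τ) * bFun p τ r =
      (1 - t ^ 2 * r ^ 2 + ((p : ℝ) - 1) * τ * t * (1 - r ^ 2)) *
        (((p : ℝ) - 2) * (1 - t ^ 2 * r ^ 2 - ((p : ℝ) - 1) * τ * t * (1 - r ^ 2)) +
          ((p : ℝ) - 1) * (1 + τ) * t * (t + 1) * r ^ 2) := by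
  obtain ⟨k, rfl⟩ : ∃ k, p = k + 2 := ⟨p - 2, by omega⟩
  subst ht
  rw [k1Fun, k2Fun, bFun, show 2 * (k + 2) - 2 = 2 * k + 2 by omega,
    show 2 * (k + 2 - 2) = 2 * k by omega, show 3 * (k + 2) - 4 = 3 * k + 2 by omega,
    Nat.add_sub_cancel]
  push_cast
  ring

lemma one_sub_sq_mul_sq_add_mul_pos (hp : 2 ≤ p) (hτ : |τ| < 1) (hr : |r| < 1) :
    0 < 1 - (r ^ (p - 2)) ^ 2 * r ^ 2 + ((p : ℝ) - 1) * τ * r ^ (p - 2) * (1 - r ^ 2) := by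
  have hS := add_one_mul_abs_pow_mul_le hr.le (p - 2)
  rw [Nat.cast_sub hp, Nat.cast_two, show (p : ℝ) - 2 + 1 = (p : ℝ) - 1 by ring] at hS
  have hpow : |r ^ (p - 2)| ≤ 1 := by rw [abs_pow]; exact pow_le_one₀ (abs_nonneg r) hr.le
  have hsq : (r ^ (p - 2)) ^ 2 * r ^ 2 < 1 := by
    rw [← mul_pow, ← sq_abs, abs_mul]
    have : |r ^ (p - 2)| * |r| < 1 := by nlinarith [abs_nonneg r, abs_nonneg (r ^ (p - 2))]
    exact pow_lt_one₀ (by positivity) this two_ne_zero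
  have hp1 : (0 : ℝ) ≤ (p : ℝ) - 1 := by
    have : (2 : ℝ) ≤ p := by exact_mod_cast hp
    linarith
  have hr2 : 0 ≤ 1 - r ^ 2 := by nlinarith [sq_abs r, abs_nonneg r]
  have := add_mul_pos_of_abs_le (x := 1 - (r ^ (p - 2)) ^ 2 * r ^ 2)
    (y := ((p : ℝ) - 1) * r ^ (p - 2) * (1 - r ^ 2))
    (by rwa [abs_mul, abs_mul, abs_of_nonneg hp1, abs_of_nonneg hr2]) (by linarith) hτ
  linarith

lemma neg_one_lt_of_neg_one_div_sub_one_lt (hp : 2 ≤ p) (hτ : -(1 / ((p : ℝ) - 1)) < τ) :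
    -1 < τ := by
  have hp2 : (2 : ℝ) ≤ p := by exact_mod_cast hp
  have : 1 / ((p : ℝ) - 1) ≤ 1 := by
    rw [div_le_one (by linarith)]
    linarith
  linarith

lemma bFun_pos (hp : 2 ≤ p) (hτ : |τ| < 1) (hr : |r| < 1) : 0 < bFun p τ r := by
  have hM := one_sub_sq_mul_sq_add_mul_pos (τ := -τ) hp (by rwa [abs_neg]) hr
  rw [bFun_eq_mul hp rfl]
  exact mul_pos (one_sub_sq_mul_sq_add_mul_pos hp hτ hr) (by linarith)

lemma mul_bFun_le (hp : 2 ≤ p) (hτ : -(1 / ((p : ℝ) - 1)) < τ) (hτ' : τ < 1) (hr : |r| < 1) :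
    (1 + ((p : ℝ) - 1) * τ) * bFun p τ r ≤
      ((p : ℝ) - 1) * (1 + τ) * (k1Fun p τ r - k2Fun p τ r) := by
  have hp2 : (2 : ℝ) ≤ p := by exact_mod_cast hp
  have hcast : ((p - 2 : ℕ) : ℝ) = (p : ℝ) - 2 := by rw [Nat.cast_sub hp, Nat.cast_two]
  have hS := add_one_mul_abs_pow_mul_le hr.le (p - 2)
  have hB := one_sub_abs_pow_mul_sq_le hr.le (p - 2)
  rw [hcast, show (p : ℝ) - 2 + 1 = (p : ℝ) - 1 by ring] at hS
  rw [hcast, show (p : ℝ) - 2 = (p : ℝ) - 1 - 1 by ring] at hB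
  have hN := twoPoint_residual_nonneg (by linarith) ⟨hτ.le, hτ'.le⟩
    (by rw [abs_pow]; exact pow_le_one₀ (abs_nonneg r) hr.le) hS hB
  rw [← sub_nonneg, sub_mul_bFun_eq_mul hp rfl]
  refine mul_nonneg (one_sub_sq_mul_sq_add_mul_pos hp ?_ hr).le ?_
  · exact abs_lt.mpr ⟨neg_one_lt_of_neg_one_div_sub_one_lt hp hτ, hτ'⟩
  · exact hN.trans_eq (by ring)

lemma quadForm_sub_quadForm_midpoint (k₁ k₂ d u₁ u₂ : ℝ) :
    (k₁ * u₁ ^ 2 + 2 * k₂ * u₁ * u₂ + k₁ * u₂ ^ 2) / d -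
      (k₁ * ((u₁ + u₂) / 2) ^ 2 + 2 * k₂ * ((u₁ + u₂) / 2) * ((u₁ + u₂) / 2) +
        k₁ * ((u₁ + u₂) / 2) ^ 2) / d = (k₁ - k₂) * (u₁ - u₂) ^ 2 / 2 / d := by
  rw [div_sub_div_same]
  ring

lemma sigmaTwo_le_sigmaTwo_midpoint (hp : 2 ≤ p) (hτ : -(1 / ((p : ℝ) - 1)) < τ) (hτ' : τ < 1)
    (hr : |r| < 1) (u₁ u₂ : ℝ) :
    SigmaTwo p τ r u₁ u₂ ≤ SigmaTwo p τ r ((u₁ + u₂) / 2) ((u₁ + u₂) / 2) := by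
  have hp2 : (2 : ℝ) ≤ p := by exact_mod_cast hp
  have hτ1 := neg_one_lt_of_neg_one_div_sub_one_lt hp hτ
  have hα : 0 < 1 + ((p : ℝ) - 1) * τ := by
    have := mul_lt_mul_of_pos_left hτ (by linarith : (0 : ℝ) < p - 1)
    rw [mul_neg, mul_one_div_cancel (by linarith)] at this
    linarith
  have hb := bFun_pos hp (abs_lt.mpr ⟨hτ1, hτ'⟩) hr
  have hpp : (0 : ℝ) < p * (p - 1) := by nlinarith
  set c := √((p : ℝ) * ((p : ℝ) - 1))
  have hc2 : c ^ 2 = p * (p - 1) := Real.sq_sqrt hpp.le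
  have hφ := phiTau_add_sub_two_mul_phiTau_midpoint_le hτ1 hτ'.le (u₁ / c) (u₂ / c)
  rw [← add_div, div_right_comm] at hφ
  set d := 2 * p * (1 + ((p : ℝ) - 1) * τ) * bFun p τ r
  have hQ : (u₁ / c - u₂ / c) ^ 2 / (4 * (1 + τ)) ≤
      (k1Fun p τ r - k2Fun p τ r) * (u₁ - u₂) ^ 2 / 2 / d := by
    rw [← sub_div, div_pow, hc2, div_div, div_div,
      div_le_div_iff₀ (mul_pos hpp (by linarith))
        (mul_pos two_pos (mul_pos (mul_pos (by linarith) hα) hb))]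
    have := mul_le_mul_of_nonneg_left (mul_bFun_le hp hτ hτ' hr)
      (by positivity : 0 ≤ 4 * (p : ℝ) * (u₁ - u₂) ^ 2)
    nlinarith [this]
  have hquad := quadForm_sub_quadForm_midpoint (k1Fun p τ r) (k2Fun p τ r) d u₁ u₂
  simp only [SigmaTwo, phiTauP]
  linarith

end SigmaTwo

theorem statement7_general
    (p : ℕ) (hp : 3 ≤ p) (τ : ℝ) (hτ : -(1 / ((p : ℝ) - 1)) < τ) (hτ' : τ < 1)
    (B : Set ℝ) (hBconn : IsPreconnected B) :
    ∀ r ∈ Set.Ioo (-1 : ℝ) 1,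
      sSup {y : ℝ | ∃ u₁ ∈ B, ∃ u₂ ∈ B, y = SigmaTwo p τ r u₁ u₂} ≤
        sSup {y : ℝ | ∃ u ∈ B, y = SigmaTwo p τ r u u} := by
  intro r hr
  have hmid : ∀ u₁ ∈ B, ∀ u₂ ∈ B, (u₁ + u₂) / 2 ∈ B := by
    intro u₁ h₁ u₂ h₂
    convert hBconn.ordConnected.convex h₁ h₂ (by norm_num : (0 : ℝ) ≤ 1 / 2)
      (by norm_num : (0 : ℝ) ≤ 1 / 2) (by norm_num) using 1
    simp only [smul_eq_mul]
    ring
  refine (csSup_eq_csSup_of_forall_exists_le ?_ ?_).le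
  · rintro _ ⟨u₁, h₁, u₂, h₂, rfl⟩
    exact ⟨_, ⟨_, hmid u₁ h₁ u₂ h₂, rfl⟩,
      sigmaTwo_le_sigmaTwo_midpoint (by omega) hτ hτ' (abs_lt.mpr hr) u₁ u₂⟩
  · rintro _ ⟨u, hu, rfl⟩
    exact ⟨_, ⟨u, hu, u, hu, rfl⟩, le_rfl⟩

/-- Lemma 6.1 of the paper: if `B` is a connected open subset of one of
`(-∞,-E_∞)`, `(-E_∞,E_∞)`, `(E_∞,∞)`, then for every `r ∈ (-1,1)`,
`sup_{u₁,u₂ ∈ B} Σ₂^{p,τ}(r,u₁,u₂) ≤ sup_{u ∈ B} Σ₂^{p,τ}(r,u,u)`. -/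
theorem statement7
    (p : ℕ) (hp : 3 ≤ p) (τ : ℝ) (hτ : -(1 / ((p : ℝ) - 1)) < τ) (hτ' : τ < 1)
    (B : Set ℝ) (hBopen : IsOpen B) (hBconn : IsPreconnected B)
    (hB : B ⊆ Set.Iio (-Einf p τ) ∨ B ⊆ Set.Ioo (-Einf p τ) (Einf p τ) ∨
      B ⊆ Set.Ioi (Einf p τ)) :
    ∀ r ∈ Set.Ioo (-1 : ℝ) 1,
      sSup {y : ℝ | ∃ u₁ ∈ B, ∃ u₂ ∈ B, y = SigmaTwo p τ r u₁ u₂} ≤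
        sSup {y : ℝ | ∃ u ∈ B, y = SigmaTwo p τ r u u} :=
  statement7_general p hp τ hτ hτ' B hBconn

end
end

section
/- Let n ≥ 2 and let M be an n×n real matrix written in blocks as M = [[H, W],[Vᵀ, S]], where H is (n−1)×(n−1), W and V are column vectors in ℝ^{n−1}, and S ∈ ℝ. Then for every ε > 0, |det M| ≤ ε^{−1}·√(‖W‖² + S²)·(‖V‖ + ε)·∏_{i=1}^{n−1} max(s_i(H), ε). If moreover M is invertible, then |det M| ≥ |det H|·|S|·(1 + ‖V‖/s_n(M))^{−1}. -/
/-!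
Upper bound. `|det M|² = det (Mᵀ M)`, and Fischer's inequality for the Gram matrix bordered by
the last column gives `det (Mᵀ M) ≤ det A · (‖W‖² + S²)` with `A = Hᵀ H + V Vᵀ`. Diagonalising
`Hᵀ H` orthogonally turns `A` into `diag(s_i(H)²) + w wᵀ` with `‖w‖ = ‖V‖`, whose determinant
`∏ dᵢ + ∑ wᵢ² ∏_{j ≠ i} dⱼ` is monotone in `d ≥ 0`. Raising every `dᵢ` to `max (s_i(H)², ε²)`
bounds it by `∏ max (s_i(H), ε)² · (1 + ‖V‖²/ε²) ≤ ∏ max (s_i(H), ε)² · (‖V‖ + ε)²/ε²`.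

Lower bound. The vector `x = M⁻¹ eₙ` has last coordinate `det H / det M` (a cofactor) and
`‖x‖ ≤ 1 / s_n(M)`. The last row of `M x = eₙ` reads `⟪V, x'⟫ + S xₙ = 1`, so Cauchy–Schwarz gives
`|S| |det H| / |det M| ≤ 1 + ‖V‖ / s_n(M)`.
-/

open MeasureTheory ProbabilityTheory Filter

noncomputable section

/-- Ascending rearrangement of the singular values of a square real matrix. -/
def svalAsc {n : ℕ} (A : Matrix (Fin n) (Fin n) ℝ) : Fin n → ℝ := fun i =>
  Real.sqrt ((Matrix.isHermitian_conjTranspose_mul_self A).eigenvalues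
    (Tuple.sort (Matrix.isHermitian_conjTranspose_mul_self A).eigenvalues i))

/-- `sval A i` is the `i`-th largest singular value of `A` (so `sval A 0 = s₁(A)` and
`sval A (n-1) = s_n(A)`). -/
def sval {n : ℕ} (A : Matrix (Fin n) (Fin n) ℝ) (i : Fin n) : ℝ := svalAsc A i.rev

/-- The largest singular value `s₁(A)` (the operator norm). -/
def smax {n : ℕ} (A : Matrix (Fin n) (Fin n) ℝ) : ℝ := ⨆ i, sval A i

/-- The smallest singular value `s_n(A)`. -/
def smin {n : ℕ} (A : Matrix (Fin n) (Fin n) ℝ) : ℝ := ⨅ i, sval A i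

open Matrix Finset

theorem Matrix.PosSemidef.det_le_det_toBlocks₁₁_mul_det_toBlocks₂₂ {m ι : Type*} [Fintype m]
    [DecidableEq m] [Fintype ι] [DecidableEq ι] [Unique ι] {P : Matrix (m ⊕ ι) (m ⊕ ι) ℝ} (hP : P.PosSemidef) :
    P.det ≤ P.toBlocks₁₁.det * P.toBlocks₂₂.det := by
  set A := P.toBlocks₁₁
  set B := P.toBlocks₁₂
  set D := P.toBlocks₂₂
  have hPAB : P = fromBlocks A B Bᴴ D := by
    have hC : P.toBlocks₂₁ = Bᴴ := by
      ext i j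
      exact (hP.isHermitian.apply (Sum.inr i) (Sum.inl j)).symm
    rw [← hC, fromBlocks_toBlocks]
  have hA : A.PosSemidef := hP.submatrix Sum.inl
  by_cases hdet : A.det = 0
  · obtain ⟨x, hx0, hAx⟩ := exists_mulVec_eq_zero_iff.mpr hdet
    have hPx : P *ᵥ Sum.elim x 0 = 0 := by
      refine (hP.dotProduct_mulVec_zero_iff _).mp ?_
      rw [hPAB, fromBlocks_mulVec]
      simp [hAx]
    have hx0' : Sum.elim x (0 : ι → ℝ) ≠ 0 := fun h => hx0 (by simpa using congrArg (· ∘ Sum.inl) h)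
    rw [exists_mulVec_eq_zero_iff.mp ⟨_, hx0', hPx⟩, hdet, zero_mul]
  · have hApd : A.PosDef := hA.posDef_iff_det_ne_zero.mpr hdet
    have := hApd.isUnit.invertible
    have hschur := (hApd.inv.posSemidef.conjTranspose_mul_mul_same B).diag_nonneg (i := default)
    conv_lhs => rw [hPAB, det_fromBlocks₁₁, invOf_eq_nonsing_inv]
    rw [det_unique D, det_unique (D - _), sub_apply]
    gcongr
    · exact hApd.det_pos.le
    · linarith

theorem Matrix.det_add_vecMulVec_of_det_ne_zero {n : Type*} [Fintype n] [DecidableEq n]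
    {A : Matrix n n ℝ} (hA : A.det ≠ 0) (u v : n → ℝ) :
    (A + vecMulVec u v).det = A.det + v ⬝ᵥ (A.adjugate *ᵥ u) := by
  rw [vecMulVec_eq Unit, det_add_replicateCol_mul_replicateRow (isUnit_iff_ne_zero.2 hA),
    det_unique (1 + _ : Matrix Unit Unit ℝ), Matrix.inv_def, Matrix.mul_smul, Matrix.smul_mul,
    ← replicateRow_vecMul, Matrix.add_apply, Matrix.smul_apply,
    replicateRow_mul_replicateCol_apply, ← dotProduct_mulVec, one_apply_eq,
    Ring.inverse_eq_inv', smul_eq_mul]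
  field_simp

theorem Matrix.det_add_vecMulVec {n : Type*} [Fintype n] [DecidableEq n] (A : Matrix n n ℝ)
    (u v : n → ℝ) : (A + vecMulVec u v).det = A.det + v ⬝ᵥ (A.adjugate *ᵥ u) := by
  have hsingular : {t : ℝ | (A + t • 1).det = 0}.Finite := by
    refine (Polynomial.finite_setOfPred_isRoot (-A).charpoly_monic.ne_zero).subset fun t ht => ?_
    simpa [eval_charpoly, sub_neg_eq_add, add_comm, smul_one_eq_diagonal] using ht
  -- Both sides are continuous along `A + t • 1` and agree off the roots of `(-A).charpoly`.
  have hext := Continuous.ext_on (hsingular.countable.dense_compl ℝ)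
    (f := fun t : ℝ => (A + t • 1 + vecMulVec u v).det)
    (g := fun t : ℝ => (A + t • 1).det + v ⬝ᵥ ((A + t • 1).adjugate *ᵥ u))
    (by fun_prop) (by fun_prop) fun t ht => det_add_vecMulVec_of_det_ne_zero ht u v
  simpa using congrFun hext 0

theorem Matrix.det_diagonal_add_vecMulVec {n : Type*} [Fintype n] [DecidableEq n]
    (d u v : n → ℝ) :
    (diagonal d + vecMulVec u v).det = ∏ i, d i + ∑ i, v i * u i * ∏ j ∈ univ.erase i, d j := by
  rw [det_add_vecMulVec, det_diagonal, adjugate_diagonal]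
  simp only [dotProduct, mulVec_diagonal]
  congr 1
  exact sum_congr rfl fun i _ => by ring

theorem Matrix.det_diagonal_add_vecMulVec_self_le {n : Type*} [Fintype n] [DecidableEq n]
    {d : n → ℝ} (hd : 0 ≤ d) (w : n → ℝ) {c : ℝ} (hc : 0 < c) :
    (diagonal d + vecMulVec w w).det ≤ (∏ i, max (d i) c) * (1 + (∑ i, w i ^ 2) / c) := by
  set d' := fun i => max (d i) c
  have hd' : ∀ i, c ≤ d' i := fun i => le_max_right _ _
  have hprod : ∏ i, d i ≤ ∏ i, d' i :=
    prod_le_prod (fun i _ => hd i) fun i _ => le_max_left _ _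
  have hminor : ∀ i, ∏ j ∈ univ.erase i, d j ≤ (∏ j, d' j) / c := by
    intro i
    rw [le_div_iff₀ hc, ← mul_prod_erase univ d' (mem_univ i), mul_comm (d' i)]
    exact mul_le_mul (prod_le_prod (fun j _ => hd j) fun j _ => le_max_left _ _) (hd' i)
      hc.le (prod_nonneg fun j _ => hc.le.trans (hd' j))
  rw [det_diagonal_add_vecMulVec, mul_add, mul_one, mul_div_assoc', mul_comm, sum_mul, sum_div]
  gcongr with i
  simpa [← sq, mul_div_assoc] using mul_le_mul_of_nonneg_left (hminor i) (sq_nonneg (w i))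

theorem Matrix.star_eq_transpose {n : Type*} (U : Matrix n n ℝ) : star U = Uᵀ := by
  rw [star_eq_conjTranspose, conjTranspose_eq_transpose_of_trivial]

section Spectral

variable {n : Type*} [Fintype n] [DecidableEq n]

theorem Matrix.det_mul_mul_star_of_mem_unitaryGroup {α : Type*} [CommRing α] [StarRing α]
    {U : Matrix n n α} (hU : U ∈ unitaryGroup n α) (X : Matrix n n α) :
    (U * X * star U).det = X.det := by
  rw [det_mul, det_mul, mul_right_comm, ← det_mul, (mem_unitaryGroup_iff.mp hU), det_one, one_mul]

theorem Matrix.sum_sq_star_mulVec_of_mem_unitaryGroup {U : Matrix n n ℝ}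
    (hU : U ∈ unitaryGroup n ℝ) (x : n → ℝ) :
    ∑ i, (star U *ᵥ x) i ^ 2 = ∑ i, x i ^ 2 := by
  have h : (star U *ᵥ x) ⬝ᵥ (star U *ᵥ x) = x ⬝ᵥ x := by
    rw [dotProduct_mulVec, star_eq_transpose, vecMul_transpose, mulVec_mulVec,
      ← star_eq_transpose, mem_unitaryGroup_iff.mp hU, one_mulVec]
  simpa only [dotProduct, sq] using h

variable {A : Matrix n n ℝ} (hA : A.IsHermitian)

theorem Matrix.IsHermitian.eq_eigenvectorUnitary_mul_diagonal_mul_star :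
    A = (hA.eigenvectorUnitary : Matrix n n ℝ) * diagonal hA.eigenvalues *
      star (hA.eigenvectorUnitary : Matrix n n ℝ) := by
  simpa [Unitary.conjStarAlgAut_apply, RCLike.ofReal_real_eq_id] using hA.spectral_theorem

theorem Matrix.IsHermitian.exists_det_add_vecMulVec_self_eq (v : n → ℝ) :
    ∃ w : n → ℝ, ∑ i, w i ^ 2 = ∑ i, v i ^ 2 ∧
      (A + vecMulVec v v).det = (diagonal hA.eigenvalues + vecMulVec w w).det := by
  set U : Matrix n n ℝ := ↑hA.eigenvectorUnitary
  have hU : U ∈ unitaryGroup n ℝ := hA.eigenvectorUnitary.2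
  refine ⟨star U *ᵥ v, sum_sq_star_mulVec_of_mem_unitaryGroup hU v, ?_⟩
  have hUv : U *ᵥ (star U *ᵥ v) = v := by
    rw [mulVec_mulVec, mem_unitaryGroup_iff.mp hU, one_mulVec]
  have hv : vecMulVec v v = U * vecMulVec (star U *ᵥ v) (star U *ᵥ v) * star U := by
    rw [mul_vecMulVec, vecMulVec_mul, star_eq_transpose, vecMul_transpose, ← star_eq_transpose,
      hUv]
  have hconj : A + vecMulVec v v =
      U * (diagonal hA.eigenvalues + vecMulVec (star U *ᵥ v) (star U *ᵥ v)) * star U := by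
    rw [Matrix.mul_add, Matrix.add_mul, ← hA.eq_eigenvectorUnitary_mul_diagonal_mul_star, ← hv]
  rw [hconj, det_mul_mul_star_of_mem_unitaryGroup hU]

theorem Matrix.IsHermitian.mul_sum_sq_le_dotProduct_mulVec {c : ℝ}
    (hc : ∀ i, c ≤ hA.eigenvalues i) (x : n → ℝ) :
    c * ∑ i, x i ^ 2 ≤ x ⬝ᵥ (A *ᵥ x) := by
  set U : Matrix n n ℝ := ↑hA.eigenvectorUnitary
  have hU : U ∈ unitaryGroup n ℝ := hA.eigenvectorUnitary.2
  set y := star U *ᵥ x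
  have hquad : x ⬝ᵥ (A *ᵥ x) = ∑ i, hA.eigenvalues i * y i ^ 2 := by
    conv_lhs => rw [hA.eq_eigenvectorUnitary_mul_diagonal_mul_star]
    rw [← mulVec_mulVec, ← mulVec_mulVec, dotProduct_mulVec, ← mulVec_transpose,
      ← star_eq_transpose]
    simp only [dotProduct, mulVec_diagonal, sq]
    exact sum_congr rfl fun i _ => by ring
  rw [hquad, ← sum_sq_star_mulVec_of_mem_unitaryGroup hU x, mul_sum]
  exact sum_le_sum fun i _ => mul_le_mul_of_nonneg_right (hc i) (sq_nonneg _)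

end Spectral

section SingularValues

variable {n : ℕ} (A : Matrix (Fin n) (Fin n) ℝ)

theorem sval_nonneg (i : Fin n) : 0 ≤ sval A i := Real.sqrt_nonneg _

theorem smin_le_sval (i : Fin n) : smin A ≤ sval A i := ciInf_le (Finite.bddBelow_range _) i

theorem smin_nonneg : 0 ≤ smin A := Real.iInf_nonneg (sval_nonneg A)

theorem sq_smin_le_eigenvalues (i : Fin n) :
    smin A ^ 2 ≤ (isHermitian_conjTranspose_mul_self A).eigenvalues i := by
  set μ := (isHermitian_conjTranspose_mul_self A).eigenvalues
  have hsval : sval A ((Tuple.sort μ).symm i).rev = √(μ i) := by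
    simp only [sval, svalAsc, Fin.rev_rev, Equiv.apply_symm_apply, μ]
  calc smin A ^ 2 ≤ √(μ i) ^ 2 := by
        gcongr
        · exact smin_nonneg A
        · exact hsval ▸ smin_le_sval A _
    _ = μ i := Real.sq_sqrt (eigenvalues_conjTranspose_mul_self_nonneg A i)

theorem smin_pos_of_det_ne_zero [NeZero n] (hA : A.det ≠ 0) : 0 < smin A := by
  obtain ⟨i, hi⟩ := exists_eq_ciInf_of_finite (f := sval A)
  have hpd : (Aᴴ * A).PosDef :=
    (posSemidef_conjTranspose_mul_self A).posDef_iff_det_ne_zero.mpr (by simp [hA])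
  rw [smin, ← hi, sval, svalAsc, Real.sqrt_pos]
  exact hpd.eigenvalues_pos _

theorem sq_prod_max_sval {ε : ℝ} (hε : 0 ≤ ε) :
    (∏ i, max (sval A i) ε) ^ 2 =
      ∏ i, max ((isHermitian_conjTranspose_mul_self A).eigenvalues i) (ε ^ 2) := by
  set μ := (isHermitian_conjTranspose_mul_self A).eigenvalues
  have hsort : ∏ i, max (sval A i) ε = ∏ i, max √(μ i) ε :=
    (Equiv.prod_comp Fin.revPerm fun i => max (svalAsc A i) ε).trans
      (Equiv.prod_comp (Tuple.sort μ) fun i => max √(μ i) ε)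
  rw [hsort, ← prod_pow]
  refine prod_congr rfl fun i _ => ?_
  rw [← Real.sqrt_sq hε, ← Real.sqrt_monotone.map_max,
    Real.sq_sqrt (le_max_of_le_right (sq_nonneg ε)), Real.sq_sqrt (sq_nonneg ε)]

end SingularValues

theorem det_conjTranspose_mul_self_add_vecMulVec_le {n : ℕ} (A : Matrix (Fin n) (Fin n) ℝ)
    (v : Fin n → ℝ) {ε : ℝ} (hε : 0 < ε) :
    (Aᴴ * A + vecMulVec v v).det ≤ (∏ i, max (sval A i) ε) ^ 2 * (1 + (∑ i, v i ^ 2) / ε ^ 2) := by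
  obtain ⟨w, hw, hdet⟩ := (isHermitian_conjTranspose_mul_self A).exists_det_add_vecMulVec_self_eq v
  rw [hdet, sq_prod_max_sval A hε.le, ← hw]
  exact det_diagonal_add_vecMulVec_self_le (eigenvalues_conjTranspose_mul_self_nonneg A) w
    (by positivity)

theorem sq_det_fromBlocks_le {m ι : Type*} [Fintype m] [DecidableEq m]
    [Fintype ι] [DecidableEq ι] [Unique ι] (H : Matrix m m ℝ) (W V : m → ℝ) (S : ℝ) :
    (fromBlocks H (replicateCol ι W) (replicateRow ι V) (of fun _ _ => S)).det ^ 2 ≤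
      (Hᴴ * H + vecMulVec V V).det * (∑ i, W i ^ 2 + S ^ 2) := by
  set N := fromBlocks H (replicateCol ι W) (replicateRow ι V) (of fun _ _ => S)
  have hfischer := (posSemidef_conjTranspose_mul_self N).det_le_det_toBlocks₁₁_mul_det_toBlocks₂₂
  have h₁₁ : (Nᴴ * N).toBlocks₁₁ = Hᴴ * H + vecMulVec V V := by
    ext i j
    simp [N, fromBlocks_transpose, fromBlocks_multiply, mul_apply, vecMulVec_apply]
  have h₂₂ : (Nᴴ * N).toBlocks₂₂.det = ∑ i, W i ^ 2 + S ^ 2 := by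
    simp [N, det_unique, fromBlocks_transpose, fromBlocks_multiply, mul_apply, sq]
  rwa [h₁₁, h₂₂, det_mul, det_conjTranspose, star_trivial, ← sq] at hfischer

theorem abs_det_fromBlocks_le {m : ℕ} {ι : Type*} [Fintype ι] [DecidableEq ι] [Unique ι]
    (H : Matrix (Fin m) (Fin m) ℝ) (W V : Fin m → ℝ) (S : ℝ) {ε : ℝ} (hε : 0 < ε) :
    |(fromBlocks H (replicateCol ι W) (replicateRow ι V) (of fun _ _ => S)).det| ≤
      ε⁻¹ * √(∑ i, W i ^ 2 + S ^ 2) * (√(∑ i, V i ^ 2) + ε) * ∏ i, max (sval H i) ε := by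
  set P := ∏ i, max (sval H i) ε
  set q := ∑ i, V i ^ 2
  set r := ∑ i, W i ^ 2 + S ^ 2
  have hq : 0 ≤ q := by positivity
  have hr : 0 ≤ r := by positivity
  have hP : 0 ≤ P := prod_nonneg fun i _ => hε.le.trans (le_max_right _ _)
  have hsq : 1 + q / ε ^ 2 ≤ ((√q + ε) / ε) ^ 2 := by
    rw [div_pow, add_sq, Real.sq_sqrt hq, le_div_iff₀ (by positivity), add_mul,
      div_mul_cancel₀ _ (by positivity)]
    nlinarith [Real.sqrt_nonneg q]
  refine abs_le_of_sq_le_sq ?_ (by positivity)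
  calc _ ≤ (Hᴴ * H + vecMulVec V V).det * r := sq_det_fromBlocks_le H W V S
    _ ≤ P ^ 2 * (1 + q / ε ^ 2) * r := by
      gcongr
      exact det_conjTranspose_mul_self_add_vecMulVec_le H V hε
    _ ≤ P ^ 2 * ((√q + ε) / ε) ^ 2 * r := by gcongr
    _ = (ε⁻¹ * √r * (√q + ε) * P) ^ 2 := by
      rw [mul_pow, mul_pow, mul_pow, Real.sq_sqrt hr]
      field_simp

theorem Matrix.submatrix_finSumFinEquiv_eq_fromBlocks {α : Type*} {m : ℕ}
    (M : Matrix (Fin (m + 1)) (Fin (m + 1)) α) :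
    M.submatrix finSumFinEquiv finSumFinEquiv =
      fromBlocks (M.submatrix Fin.castSucc Fin.castSucc)
        (replicateCol (Fin 1) fun i => M i.castSucc (Fin.last m))
        (replicateRow (Fin 1) fun j => M (Fin.last m) j.castSucc)
        (of fun _ _ => M (Fin.last m) (Fin.last m)) := by
  have hlast : ∀ j : Fin 1, (finSumFinEquiv (Sum.inr j) : Fin (m + 1)) = Fin.last m := by
    intro j
    rw [Subsingleton.elim j 0]
    rfl
  ext (i | i) (j | j) <;> simp [hlast] <;> rfl

theorem Matrix.inv_apply_last_last {K : Type*} [Field K] {m : ℕ}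
    (M : Matrix (Fin (m + 1)) (Fin (m + 1)) K) :
    M⁻¹ (Fin.last m) (Fin.last m) = (M.submatrix Fin.castSucc Fin.castSucc).det / M.det := by
  rw [inv_def, smul_apply, adjugate_fin_succ_eq_det_submatrix, Fin.succAbove_last,
    Ring.inverse_eq_inv', smul_eq_mul, Fin.val_last, Even.neg_one_pow ⟨m, rfl⟩, one_mul,
    inv_mul_eq_div]

theorem sq_smin_mul_sum_sq_le {n : ℕ} (M : Matrix (Fin n) (Fin n) ℝ) (x : Fin n → ℝ) :
    smin M ^ 2 * ∑ i, x i ^ 2 ≤ ∑ i, (M *ᵥ x) i ^ 2 := by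
  have hgram : x ⬝ᵥ ((Mᴴ * M) *ᵥ x) = ∑ i, (M *ᵥ x) i ^ 2 := by
    rw [← mulVec_mulVec, dotProduct_mulVec, conjTranspose_eq_transpose_of_trivial,
      vecMul_transpose]
    simp only [dotProduct, sq]
  exact hgram ▸ (isHermitian_conjTranspose_mul_self M).mul_sum_sq_le_dotProduct_mulVec
    (sq_smin_le_eigenvalues M) x

theorem abs_det_submatrix_castSucc_mul_abs_le {m : ℕ} {M : Matrix (Fin (m + 1)) (Fin (m + 1)) ℝ}
    (hM : M.det ≠ 0) :
    |(M.submatrix Fin.castSucc Fin.castSucc).det| * |M (Fin.last m) (Fin.last m)| ≤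
      (1 + √(∑ i : Fin m, M (Fin.last m) i.castSucc ^ 2) / smin M) * |M.det| := by
  set e : Fin (m + 1) → ℝ := Pi.single (Fin.last m) 1
  set x := M⁻¹ *ᵥ e
  set V := fun i : Fin m => M (Fin.last m) i.castSucc
  set S := M (Fin.last m) (Fin.last m)
  have hsmin := smin_pos_of_det_ne_zero M hM
  have hMx : M *ᵥ x = e := by
    rw [mulVec_mulVec, mul_nonsing_inv M (isUnit_iff_ne_zero.2 hM), one_mulVec]
  have hxlast : x (Fin.last m) = (M.submatrix Fin.castSucc Fin.castSucc).det / M.det := by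
    rw [← inv_apply_last_last]
    simp [x, e]
  have hrow : ∑ i, V i * x i.castSucc + S * x (Fin.last m) = 1 := by
    have h : (M *ᵥ x) (Fin.last m) = 1 := by rw [hMx]; exact Pi.single_eq_same _ _
    rwa [mulVec, dotProduct, Fin.sum_univ_castSucc] at h
  have hx : √(∑ i, x i ^ 2) ≤ 1 / smin M := by
    have h := sq_smin_mul_sum_sq_le M x
    rw [hMx, show ∑ i, e i ^ 2 = 1 by simp [e, Pi.single_apply]] at h
    rw [le_div_iff₀ hsmin, mul_comm, ← Real.sqrt_sq hsmin.le, ← Real.sqrt_mul (sq_nonneg _)]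
    exact Real.sqrt_le_one.mpr h
  have hx' : ∑ i : Fin m, x i.castSucc ^ 2 ≤ ∑ i, x i ^ 2 := by
    rw [Fin.sum_univ_castSucc]
    exact le_add_of_nonneg_right (sq_nonneg _)
  have hcs : |∑ i, V i * x i.castSucc| ≤ √(∑ i, V i ^ 2) / smin M := by
    calc _ ≤ √(∑ i, V i ^ 2) * √(∑ i : Fin m, x i.castSucc ^ 2) := by
          rw [← Real.sqrt_mul (by positivity)]
          exact Real.abs_le_sqrt (sum_mul_sq_le_sq_mul_sq _ _ _)
      _ ≤ √(∑ i, V i ^ 2) * (1 / smin M) := by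
          gcongr
          exact (Real.sqrt_le_sqrt hx').trans hx
      _ = _ := mul_one_div _ _
  have hSx : |S * x (Fin.last m)| ≤ 1 + √(∑ i, V i ^ 2) / smin M := by
    calc _ = |1 - ∑ i, V i * x i.castSucc| := by rw [← hrow, add_sub_cancel_left]
      _ ≤ |1| + |∑ i, V i * x i.castSucc| := abs_sub _ _
      _ ≤ _ := by rw [abs_one]; gcongr
  calc _ = |S * x (Fin.last m)| * |M.det| := by
        rw [hxlast, abs_mul, abs_div]
        field_simp
    _ ≤ _ := by gcongr

theorem statement17_general
    (m : ℕ) (M : Matrix (Fin (m + 1)) (Fin (m + 1)) ℝ)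
    (H : Matrix (Fin m) (Fin m) ℝ) (W V : Fin m → ℝ) (S : ℝ)
    (hH : H = M.submatrix Fin.castSucc Fin.castSucc)
    (hW : ∀ i : Fin m, W i = M i.castSucc (Fin.last m))
    (hV : ∀ i : Fin m, V i = M (Fin.last m) i.castSucc)
    (hS : S = M (Fin.last m) (Fin.last m)) :
    (∀ ε > (0 : ℝ),
      |M.det| ≤ ε⁻¹ * Real.sqrt ((∑ i, W i ^ 2) + S ^ 2) *
        (Real.sqrt (∑ i, V i ^ 2) + ε) * ∏ i, max (sval H i) ε) ∧
    (M.det ≠ 0 →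
      |H.det| * |S| * (1 + Real.sqrt (∑ i, V i ^ 2) / smin M)⁻¹ ≤ |M.det|) := by
  subst hH hS
  obtain rfl : W = fun i => M i.castSucc (Fin.last m) := funext hW
  obtain rfl : V = fun i => M (Fin.last m) i.castSucc := funext hV
  refine ⟨fun ε hε => ?_, fun hM => ?_⟩
  · rw [← det_submatrix_equiv_self finSumFinEquiv M, submatrix_finSumFinEquiv_eq_fromBlocks]
    exact abs_det_fromBlocks_le _ _ _ _ hε
  · have hpos : 0 < 1 + √(∑ i : Fin m, M (Fin.last m) i.castSucc ^ 2) / smin M := by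
      have := smin_nonneg M
      positivity
    rw [← div_eq_mul_inv, div_le_iff₀ hpos, mul_comm |M.det|]
    exact abs_det_submatrix_castSucc_mul_abs_le hM

/-- Lemma 4.1 of the paper: deterministic upper and lower bounds for the
determinant of a matrix in terms of the block decomposition `M = [[H, W],[Vᵀ, S]]`. Here `M`
is an `(m+1)×(m+1)` matrix with `m ≥ 1`, `H` its top-left `m×m` block, `W` its last column,
`V` its last row (without the corner), and `S` its corner entry. -/
theorem statement17
    (m : ℕ) (hm : 1 ≤ m) (M : Matrix (Fin (m + 1)) (Fin (m + 1)) ℝ)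
    (H : Matrix (Fin m) (Fin m) ℝ) (W V : Fin m → ℝ) (S : ℝ)
    (hH : H = M.submatrix Fin.castSucc Fin.castSucc)
    (hW : ∀ i : Fin m, W i = M i.castSucc (Fin.last m))
    (hV : ∀ i : Fin m, V i = M (Fin.last m) i.castSucc)
    (hS : S = M (Fin.last m) (Fin.last m)) :
    (∀ ε > (0 : ℝ),
      |M.det| ≤ ε⁻¹ * Real.sqrt ((∑ i, W i ^ 2) + S ^ 2) *
        (Real.sqrt (∑ i, V i ^ 2) + ε) * ∏ i, max (sval H i) ε) ∧
    (M.det ≠ 0 →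
      |H.det| * |S| * (1 + Real.sqrt (∑ i, V i ^ 2) / smin M)⁻¹ ≤ |M.det|) :=
  statement17_general m M H W V S hH hW hV hS

end
end
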